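/- There exist a constant a > 0 and a non-decreasing function d : ℕ × ℕ → ℕ with d(ℓ,n) ≤ a·ℓ·log₂(n+1) for all ℓ, n ≥ 1, such that for every finite simple graph G on n vertices, all integers ℓ, m₀ ≥ 1, and every assignment q : V(G) → ℚ of nonnegative costs to the vertices of G, writing d = d(ℓ,n), at least one of the following holds: (i) G contains an m₀-bounded model of K_{m₀} of depth d; or (ii) there exist disjoint sets C, M ⊆ V(G) such that C ∪ M is a balanced separator in G, q(C) ≤ q(V(G))/ℓ, and for some m ≤ min(m₀, ω_d(G)), M is the support of a min(m₀, ω_d(G))-bounded model of K_m of depth d in G. -/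

import Mathlib

open scoped Classical

universe u

/-- `C` is a balanced separator in `G`: every connected component of `G - C`
has at most `(2/3)|V(G)|` vertices. -/
def IsBalancedSeparator {V : Type u} (G : SimpleGraph V) (C : Set V) : Prop :=
  ∀ K : (G.induce Cᶜ).ConnectedComponent, 3 * K.supp.ncard ≤ 2 * Nat.card V

/-- A model of the clique `K_m` of depth `d` in `G`. -/
structure CliqueModel {V : Type u} (G : SimpleGraph V) (m d : ℕ) where
  B : Fin m → Set V
  disj : ∀ i j : Fin m, i ≠ j → Disjoint (B i) (B j)
  conn : ∀ i, (G.induce (B i)).Connected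
  rad : ∀ i, ∃ v : B i, ∀ u : B i, (G.induce (B i)).dist v u ≤ d
  adj : ∀ i j : Fin m, i < j → ∃ u ∈ B i, ∃ v ∈ B j, G.Adj u v

/-- The support of a clique model. -/
def CliqueModel.support {V : Type u} {G : SimpleGraph V} {m d : ℕ}
    (M : CliqueModel G m d) : Set V := ⋃ i, M.B i

/-- An `m₀`-bounded model: each branch set has at most `m₀ * d` vertices. -/
def CliqueModel.Bounded {V : Type u} {G : SimpleGraph V} {m d : ℕ}
    (M : CliqueModel G m d) (m₀ : ℕ) : Prop := ∀ i, (M.B i).ncard ≤ m₀ * d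

/-- `ω_d(G)`: the maximum `m` such that `G` contains a model of `K_m` of depth `d`. -/
noncomputable def omegaDepth {V : Type u} (G : SimpleGraph V) (d : ℕ) : ℕ :=
  sSup {m | Nonempty (CliqueModel G m d)}

/-- Membership in the class `𝒢_{c,ε}`: every subgraph `H` of `G` has a
balanced separator of order at most `c * |V(H)|^(1-ε)`. -/
def MemGSep {V : Type u} (G : SimpleGraph V) (c ε : ℝ) : Prop :=
  ∀ (S : Set V) (H : SimpleGraph S), H ≤ G.induce S →
    ∃ C : Set S, IsBalancedSeparator H C ∧ (C.ncard : ℝ) ≤ c * (S.ncard : ℝ) ^ (1 - ε)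

/-- A model of a graph `H` of depth `r` in `G` (witnessing that `H` is obtained from a
subgraph of `G` by contracting vertex-disjoint subgraphs of radius at most `r`). -/
structure MinorModel {V : Type u} {W : Type w} (G : SimpleGraph V) (H : SimpleGraph W)
    (r : ℕ) where
  B : W → Set V
  disj : ∀ i j : W, i ≠ j → Disjoint (B i) (B j)
  conn : ∀ i, (G.induce (B i)).Connected
  rad : ∀ i, ∃ v : B i, ∀ u : B i, (G.induce (B i)).dist v u ≤ r
  adj : ∀ i j : W, H.Adj i j → ∃ u ∈ B i, ∃ v ∈ B j, G.Adj u v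

/-- `∇_r(G)`: the maximum average degree of a graph obtained from a subgraph of `G`
by contracting vertex-disjoint subgraphs of radius at most `r`. -/
noncomputable def nabla {V : Type u} (G : SimpleGraph V) (r : ℕ) : ℝ :=
  sSup { x | ∃ (m : ℕ) (H : SimpleGraph (Fin m)), 0 < m ∧ Nonempty (MinorModel G H r) ∧
    x = 2 * (H.edgeSet.ncard : ℝ) / m }

/-- A tree decomposition of `G`. -/
structure TreeDecomp {V : Type u} (G : SimpleGraph V) where
  ι : Type u
  T : SimpleGraph ι
  tree : T.IsTree
  bag : ι → Set V
  hedge : ∀ u v : V, G.Adj u v → ∃ z, u ∈ bag z ∧ v ∈ bag z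
  hvert : ∀ v : V, (T.induce {z | v ∈ bag z}).Connected

/-- `G` has treewidth at most `k`. -/
def TreewidthLE {V : Type u} (G : SimpleGraph V) (k : ℕ) : Prop :=
  ∃ D : TreeDecomp G, ∀ z, (D.bag z).ncard ≤ k + 1

/-- `coTW_k(G)`: sets of vertices whose removal brings the treewidth down to at most `k`. -/
def coTW {V : Type u} (G : SimpleGraph V) (k : ℕ) : Set (Set V) :=
  { X | TreewidthLE (G.induce Xᶜ) k }

/-- An `ε`-thin (finitely supported) probability distribution on a collection `𝒳`
of subsets of the vertex set. -/
structure ThinDist {V : Type u} (𝒳 : Set (Set V)) (ε : ℝ) where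
  supp : Finset (Set V)
  p : Set V → ℝ
  nonneg : ∀ X, 0 ≤ p X
  mem : ∀ X ∈ supp, X ∈ 𝒳
  zero_outside : ∀ X ∉ supp, p X = 0
  total : ∑ X ∈ supp, p X = 1
  thin : ∀ v : V, ∑ X ∈ supp, (if v ∈ X then p X else 0) ≤ ε

/-!
Plotkin–Rao–Smith ball carving, with costs charged to `μ = q / (2 q(V)) + 1 / (2n)`: a measure of
total mass at most `1` giving every vertex mass at least `1 / (2n)`. Keep a cut `C`, pairwise
touching branch sets, and the component `X` of the rest with more than `2n/3` vertices, which
every branch set touches; grow balls in `G[X]` around some `v ∈ X`. A layer heavier than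
`1/(2ℓ)` of the ball inside it (or of the part of `X` beyond it) multiplies that mass by
`1 + 1/(2ℓ)`, which cannot happen `2ℓ(⌊log₂ n⌋ + 2)` times in a row. So within twice that radius
either every branch set touches the ball, and walks from `v` to contact points form a new branch
set (`m₀` of them are a model of `K_{m₀}`), or a light layer is cut, its cost
`ℓ q(layer) ≤ q(V) μ(side)` paid by the side that leaves the large component for good. Branch sets
that stop touching the large component are released. `X` shrinks at each step, and when no large
component is left, cut plus branch sets is a balanced separator with `ℓ q(C) ≤ q(V) μ(V) ≤ q(V)`.
-/

namespace SimpleGraph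

variable {V : Type*} {G : SimpleGraph V}

/-- `X` is the vertex set of a connected component of `G - T`. -/
structure IsComponentMinus (G : SimpleGraph V) (T X : Set V) : Prop where
  nonempty : X.Nonempty
  disjoint : Disjoint X T
  closed : ∀ x ∈ X, ∀ y, G.Adj x y → y ∉ T → y ∈ X
  preconnected : ∀ x ∈ X, ∀ y ∈ X, ∃ p : G.Walk x y, ∀ z ∈ p.support, z ∈ X

namespace IsComponentMinus

variable {T T' X X' : Set V}

theorem mem_of_walk (h : G.IsComponentMinus T X) {x y : V} (p : G.Walk x y)
    (hp : ∀ z ∈ p.support, z ∉ T) (hx : x ∈ X) : y ∈ X := by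
  induction p with
  | nil => exact hx
  | cons hadj p ih =>
    exact ih (fun z hz => hp z (List.mem_cons_of_mem _ hz))
      (h.closed _ hx _ hadj (hp _ (by simp)))

theorem subset_of_inter_nonempty (h : G.IsComponentMinus T X) (h' : G.IsComponentMinus T' X')
    (hT : T ⊆ T') (hXX' : (X ∩ X').Nonempty) : X' ⊆ X := by
  obtain ⟨z, hzX, hzX'⟩ := hXX'
  intro y hy
  obtain ⟨p, hp⟩ := h'.preconnected z hzX' y hy
  exact h.mem_of_walk p (fun w hw hwT => Set.disjoint_left.mp h'.disjoint (hp w hw) (hT hwT)) hzX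

theorem eq_of_inter_nonempty (h : G.IsComponentMinus T X) (h' : G.IsComponentMinus T X')
    (hXX' : (X ∩ X').Nonempty) : X = X' :=
  (h'.subset_of_inter_nonempty h le_rfl (Set.inter_comm X X' ▸ hXX')).antisymm
    (h.subset_of_inter_nonempty h' le_rfl hXX')

theorem of_subset_of_not_adj (h : G.IsComponentMinus T X) (hT' : T' ⊆ T)
    (hadj : ∀ x ∈ X, ∀ y ∈ T \ T', ¬ G.Adj x y) : G.IsComponentMinus T' X where
  nonempty := h.nonempty
  disjoint := h.disjoint.mono_right hT'
  closed x hx y hxy hy := h.closed x hx y hxy fun hyT => hadj x hx y ⟨hyT, hy⟩ hxy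
  preconnected := h.preconnected

end IsComponentMinus

theorem isComponentMinus_image_supp {T : Set V} (K : (G.induce Tᶜ).ConnectedComponent) :
    G.IsComponentMinus T (Subtype.val '' K.supp) where
  nonempty := K.nonempty_supp.image _
  disjoint := Set.disjoint_left.mpr fun _ ⟨y, _, hy⟩ => hy ▸ y.2
  closed := by
    rintro _ ⟨x, hx, rfl⟩ y hxy hy
    exact ⟨⟨y, hy⟩, K.mem_supp_of_adj_mem_supp hx hxy, rfl⟩
  preconnected := by
    rintro _ ⟨x, hx, rfl⟩ _ ⟨y, hy, rfl⟩
    obtain ⟨p⟩ := K.reachable_of_mem_supp hx hy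
    refine ⟨p.map (Embedding.induce Tᶜ).toHom, fun z hz => ?_⟩
    replace hz : z ∈ (p.map (Embedding.induce Tᶜ).toHom).support := hz
    rw [Walk.support_map, List.mem_map] at hz
    obtain ⟨w, hw, rfl⟩ := hz
    refine ⟨w, ?_, rfl⟩
    rw [ConnectedComponent.mem_supp_iff] at hx ⊢
    exact hx ▸ (ConnectedComponent.sound (p.takeUntil w hw).reachable).symm

variable (G) in
structure IsRootedAt (v : V) (r : ℕ) (B : Set V) : Prop where
  mem : v ∈ B
  exists_walk : ∀ u ∈ B, ∃ p : G.Walk v u, (∀ z ∈ p.support, z ∈ B) ∧ p.length ≤ r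

namespace IsRootedAt

variable {v : V} {r s : ℕ} {B B' : Set V}

theorem mono (h : G.IsRootedAt v r B) (hrs : r ≤ s) : G.IsRootedAt v s B :=
  ⟨h.mem, fun u hu => (h.exists_walk u hu).imp fun _ hp => ⟨hp.1, hp.2.trans hrs⟩⟩

theorem union (h : G.IsRootedAt v r B) (h' : G.IsRootedAt v r B') :
    G.IsRootedAt v r (B ∪ B') := by
  refine ⟨Or.inl h.mem, ?_⟩
  rintro u (hu | hu)
  · obtain ⟨p, hp, hlen⟩ := h.exists_walk u hu
    exact ⟨p, fun z hz => Or.inl (hp z hz), hlen⟩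
  · obtain ⟨p, hp, hlen⟩ := h'.exists_walk u hu
    exact ⟨p, fun z hz => Or.inr (hp z hz), hlen⟩

theorem preconnected (h : G.IsRootedAt v r B) :
    ∀ x ∈ B, ∀ y ∈ B, ∃ p : G.Walk x y, ∀ z ∈ p.support, z ∈ B := by
  intro x hx y hy
  obtain ⟨p, hp, -⟩ := h.exists_walk x hx
  obtain ⟨p', hp', -⟩ := h.exists_walk y hy
  refine ⟨p.reverse.append p', fun z hz => ?_⟩
  rcases Walk.mem_support_append_iff _ _ |>.mp hz with hz | hz
  · exact hp z (by simpa using hz)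
  · exact hp' z hz

theorem exists_dist_le (h : G.IsRootedAt v r B) :
    ∃ c : B, ∀ u : B, (G.induce B).dist c u ≤ r := by
  refine ⟨⟨v, h.mem⟩, fun ⟨u, hu⟩ => ?_⟩
  obtain ⟨p, hp, hlen⟩ := h.exists_walk u hu
  have hlen' := congrArg Walk.length (p.map_induce hp)
  rw [Walk.length_map] at hlen'
  exact (dist_le (p.induce B hp)).trans (hlen' ▸ hlen)

theorem connected_induce (h : G.IsRootedAt v r B) : (G.induce B).Connected := by
  refine (connected_iff _).mpr ⟨fun ⟨x, hx⟩ ⟨y, hy⟩ => ?_, ⟨⟨v, h.mem⟩⟩⟩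
  obtain ⟨p, hp⟩ := h.preconnected x hx y hy
  exact (p.induce B hp).reachable

end IsRootedAt

theorem Walk.isRootedAt_support {v u : V} (p : G.Walk v u) :
    G.IsRootedAt v p.length {z | z ∈ p.support} :=
  ⟨p.start_mem_support, fun _ hu => ⟨p.takeUntil _ hu,
    fun _ hz => p.support_takeUntil_subset_support hu hz, p.length_takeUntil_le_length hu⟩⟩

theorem Walk.ncard_support_le {v u : V} (p : G.Walk v u) :
    ({z | z ∈ p.support} : Set V).ncard ≤ p.length + 1 := by
  rw [← p.length_support, ← List.coe_toFinset, Set.ncard_coe_finset]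
  exact p.support.toFinset_card_le

variable (G) in
def ballIn (X : Set V) (v : V) : ℕ → Set V
  | 0 => {v}
  | r + 1 => ballIn X v r ∪ {y | y ∈ X ∧ ∃ x ∈ ballIn X v r, G.Adj x y}

variable (G) in
def layer (X : Set V) (v : V) (r : ℕ) : Set V :=
  G.ballIn X v (r + 1) \ G.ballIn X v r

section Ball

variable {X : Set V} {v : V}

theorem ballIn_mono : Monotone (G.ballIn X v) :=
  monotone_nat_of_le_succ fun _ => Set.subset_union_left

theorem mem_ballIn_self (r : ℕ) : v ∈ G.ballIn X v r :=
  ballIn_mono (Nat.zero_le r) rfl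

theorem ballIn_subset (hv : v ∈ X) : ∀ r, G.ballIn X v r ⊆ X
  | 0 => Set.singleton_subset_iff.mpr hv
  | r + 1 => Set.union_subset (ballIn_subset hv r) fun _ hy => hy.1

theorem isRootedAt_ballIn : ∀ r, G.IsRootedAt v r (G.ballIn X v r)
  | 0 => ⟨rfl, fun u hu => by
      obtain rfl : u = v := hu
      exact ⟨.nil, by simp [ballIn], le_rfl⟩⟩
  | r + 1 => by
    refine ⟨mem_ballIn_self _, ?_⟩
    rintro u (hu | ⟨huX, x, hx, hxu⟩)
    · obtain ⟨p, hp, hlen⟩ := (isRootedAt_ballIn r).exists_walk u hu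
      exact ⟨p, fun z hz => Set.subset_union_left (hp z hz), hlen.trans r.le_succ⟩
    · obtain ⟨p, hp, hlen⟩ := (isRootedAt_ballIn r).exists_walk x hx
      refine ⟨p.concat hxu, fun z hz => ?_, by simpa using hlen⟩
      rw [Walk.support_concat, List.mem_append, List.mem_singleton] at hz
      rcases hz with hz | rfl
      · exact Set.subset_union_left (hp z hz)
      · exact Or.inr ⟨huX, x, hx, hxu⟩

theorem layer_subset (hv : v ∈ X) (r : ℕ) : G.layer X v r ⊆ X :=
  fun _ hx => ballIn_subset hv (r + 1) hx.1

theorem disjoint_ballIn_layer (r : ℕ) : Disjoint (G.ballIn X v r) (G.layer X v r) :=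
  Set.disjoint_sdiff_right

theorem ballIn_union_layer (r : ℕ) :
    G.ballIn X v r ∪ G.layer X v r = G.ballIn X v (r + 1) :=
  Set.union_sdiff_cancel (ballIn_mono r.le_succ)

theorem layer_union_diff_ballIn (hv : v ∈ X) (r : ℕ) :
    G.layer X v r ∪ (X \ G.ballIn X v (r + 1)) = X \ G.ballIn X v r := by
  ext x
  have hX := @ballIn_subset _ G X v hv (r + 1) x
  have hmono := @ballIn_mono _ G X v r (r + 1) r.le_succ x
  simp only [layer, Set.mem_union, Set.mem_sdiff]
  tauto

theorem disjoint_layer_diff_ballIn (r : ℕ) :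
    Disjoint (G.layer X v r) (X \ G.ballIn X v (r + 1)) :=
  Set.disjoint_left.mpr fun _ hx hx' => hx'.2 hx.1

theorem IsComponentMinus.isComponentMinus_ballIn {T : Set V} (h : G.IsComponentMinus T X)
    (hv : v ∈ X) (r : ℕ) : G.IsComponentMinus (T ∪ G.layer X v r) (G.ballIn X v r) where
  nonempty := ⟨v, mem_ballIn_self r⟩
  disjoint := Set.disjoint_union_right.mpr
    ⟨h.disjoint.mono_left (ballIn_subset hv r), disjoint_ballIn_layer r⟩
  closed x hx y hxy hy := by
    have hyX : y ∈ X := h.closed x (ballIn_subset hv r hx) y hxy fun hyT => hy (Or.inl hyT)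
    by_contra hyB
    exact hy (Or.inr ⟨Or.inr ⟨hyX, x, hx, hxy⟩, hyB⟩)
  preconnected := (isRootedAt_ballIn r).preconnected

end Ball

variable (G) in
def Touches (A B : Set V) : Prop := ∃ a ∈ A, ∃ b ∈ B, G.Adj a b

theorem Touches.mono_right {A B B' : Set V} (h : G.Touches A B) (hB : B ⊆ B') :
    G.Touches A B' :=
  let ⟨a, ha, b, hb, hab⟩ := h
  ⟨a, ha, b, hB hb, hab⟩

theorem Touches.symm {A B : Set V} (h : G.Touches A B) : G.Touches B A :=
  let ⟨a, ha, b, hb, hab⟩ := h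
  ⟨b, hb, a, ha, hab.symm⟩

theorem IsRootedAt.exists_subset_touches {v : V} {r : ℕ} {B : Set V} (hB : G.IsRootedAt v r B) :
    ∀ S : List (Set V), (∀ s ∈ S, G.Touches s B) →
      ∃ B' ⊆ B, G.IsRootedAt v r B' ∧ B'.ncard ≤ S.length * (r + 1) + 1 ∧
        ∀ s ∈ S, G.Touches s B'
  | [], _ => by
    refine ⟨{z | z ∈ (Walk.nil : G.Walk v v).support}, ?_,
      (Walk.nil.isRootedAt_support).mono (Nat.zero_le r), by simp, by simp⟩
    intro z hz
    obtain rfl : z = v := by simpa using hz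
    exact hB.mem
  | s :: S, hS => by
    obtain ⟨B', hB'B, hB', hcard, htouch⟩ :=
      hB.exists_subset_touches S fun s' hs' => hS s' (List.mem_cons_of_mem s hs')
    obtain ⟨y, hy, x, hx, hyx⟩ := hS s List.mem_cons_self
    obtain ⟨p, hp, hlen⟩ := hB.exists_walk x hx
    refine ⟨B' ∪ {z | z ∈ p.support}, Set.union_subset hB'B hp,
      hB'.union (p.isRootedAt_support.mono hlen), ?_, ?_⟩
    · calc (B' ∪ {z | z ∈ p.support}).ncard
          ≤ B'.ncard + {z | z ∈ p.support}.ncard := Set.ncard_union_le _ _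
        _ ≤ (S.length * (r + 1) + 1) + (r + 1) := by
          gcongr
          exact p.ncard_support_le.trans (by omega)
        _ = (s :: S).length * (r + 1) + 1 := by simp only [List.length_cons]; ring
    · rintro s' (_ | ⟨_, hs'⟩)
      · exact ⟨y, hy, x, Or.inr p.end_mem_support, hyx⟩
      · exact (htouch s' hs').mono_right Set.subset_union_left

end SimpleGraph

open SimpleGraph

section CliqueModel

variable {V : Type*} {G : SimpleGraph V} {m d : ℕ}

noncomputable def CliqueModel.ofList (S : List (Set V))
    (hS : S.Pairwise fun b b' => Disjoint b b' ∧ G.Touches b b')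
    (hroot : ∀ b ∈ S, ∃ v, G.IsRootedAt v d b) : CliqueModel G S.length d where
  B i := S.get i
  disj i j hij := by
    rcases lt_or_gt_of_ne hij with h | h
    · exact (List.pairwise_iff_get.mp hS _ _ h).1
    · exact (List.pairwise_iff_get.mp hS _ _ h).1.symm
  conn i := by
    obtain ⟨v, hv⟩ := hroot _ (S.get_mem i)
    exact hv.connected_induce
  rad i := by
    obtain ⟨v, hv⟩ := hroot _ (S.get_mem i)
    exact hv.exists_dist_le
  adj i j hij := (List.pairwise_iff_get.mp hS _ _ hij).2

theorem CliqueModel.support_ofList (S : List (Set V)) hS hroot :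
    (CliqueModel.ofList (G := G) (d := d) S hS hroot).support = ⋃ b ∈ S, b := by
  ext x
  simp only [CliqueModel.support, CliqueModel.ofList, Set.mem_iUnion]
  constructor
  · rintro ⟨i, hi⟩
    exact ⟨_, S.get_mem i, hi⟩
  · rintro ⟨b, hb, hx⟩
    obtain ⟨i, rfl⟩ := List.mem_iff_get.mp hb
    exact ⟨i, hx⟩

theorem CliqueModel.bounded_ofList (S : List (Set V)) hS hroot {m₀ : ℕ}
    (hcard : ∀ b ∈ S, b.ncard ≤ m₀ * d) :
    (CliqueModel.ofList (G := G) (d := d) S hS hroot).Bounded m₀ :=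
  fun i => hcard _ (S.get_mem i)

theorem CliqueModel.le_card [Finite V] (M : CliqueModel G m d) : m ≤ Nat.card V := by
  let f : Fin m → V := fun i => (M.conn i).nonempty.some
  have hf : ∀ i, f i ∈ M.B i := fun i => (M.conn i).nonempty.some.2
  have hinj : Function.Injective f := fun i j hij => by
    by_contra hne
    exact Set.disjoint_left.mp (M.disj i j hne) (hf i) (hij ▸ hf j)
  simpa using Nat.card_le_card_of_injective f hinj

theorem CliqueModel.le_omegaDepth [Finite V] (M : CliqueModel G m d) : m ≤ omegaDepth G d :=
  le_csSup ⟨Nat.card V, fun _ ⟨M'⟩ => M'.le_card⟩ ⟨M⟩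

end CliqueModel

namespace PlotkinRaoSmith

section Weight

variable {V : Type*} [Fintype V]

noncomputable def weight (μ : V → ℚ) (A : Set V) : ℚ := ∑ x ∈ A.toFinset, μ x

variable {μ : V → ℚ} {A B : Set V}

theorem weight_nonneg (hμ : ∀ x, 0 ≤ μ x) (A : Set V) : 0 ≤ weight μ A :=
  Finset.sum_nonneg fun x _ => hμ x

theorem weight_mono (hμ : ∀ x, 0 ≤ μ x) (hAB : A ⊆ B) : weight μ A ≤ weight μ B :=
  Finset.sum_le_sum_of_subset_of_nonneg (Set.toFinset_subset_toFinset.mpr hAB) fun x _ _ => hμ x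

theorem weight_union (hAB : Disjoint A B) : weight μ (A ∪ B) = weight μ A + weight μ B := by
  rw [weight, Set.toFinset_union, Finset.sum_union (Set.disjoint_toFinset.mpr hAB)]
  rfl

theorem weight_singleton (v : V) : weight μ {v} = μ v := by
  simp [weight]

theorem weight_le_weight {μ' : V → ℚ} (h : ∀ x, μ x ≤ μ' x) (A : Set V) :
    weight μ A ≤ weight μ' A :=
  Finset.sum_le_sum fun x _ => h x

theorem weight_const_mul (c : ℚ) (A : Set V) :
    weight (fun x => c * μ x) A = c * weight μ A :=
  (Finset.mul_sum _ _ _).symm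

theorem le_weight_of_nonempty {ε : ℚ} (hμ : ∀ x, 0 ≤ μ x) (hε : ∀ x, ε ≤ μ x)
    (hA : A.Nonempty) : ε ≤ weight μ A := by
  obtain ⟨x, hx⟩ := hA
  calc ε ≤ weight μ {x} := (weight_singleton x).symm ▸ hε x
    _ ≤ weight μ A := weight_mono hμ (Set.singleton_subset_iff.mpr hx)

end Weight

section CostMeasure

variable {V : Type*} [Fintype V] {q : V → ℚ}

/-- Half the normalised cost plus half the uniform distribution (the first half is `0` when
`q = 0`, as `x / 0 = 0`). -/
noncomputable def costMeasure (q : V → ℚ) (v : V) : ℚ :=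
  q v / (2 * ∑ x, q x) + 1 / (2 * Nat.card V)

theorem le_costMeasure (hq : ∀ x, 0 ≤ q x) (v : V) :
    1 / (2 * Nat.card V : ℚ) ≤ costMeasure q v :=
  le_add_of_nonneg_left (div_nonneg (hq v) (by have := Fintype.sum_nonneg hq; positivity))

theorem costMeasure_nonneg (hq : ∀ x, 0 ≤ q x) (v : V) : 0 ≤ costMeasure q v :=
  le_trans (by positivity) (le_costMeasure hq v)

theorem le_mul_costMeasure (hq : ∀ x, 0 ≤ q x) (v : V) :
    q v ≤ 2 * (∑ x, q x) * costMeasure q v := by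
  rcases (Fintype.sum_nonneg hq).eq_or_lt with hQ | hQ
  · rw [← hQ, congrFun ((Fintype.sum_eq_zero_iff_of_nonneg hq).mp hQ.symm) v]
    simp
  · rw [costMeasure, mul_add, mul_div_cancel₀ _ (by positivity)]
    exact le_add_of_nonneg_right (by positivity)

theorem weight_costMeasure_le_one (hq : ∀ x, 0 ≤ q x) (A : Set V) :
    weight (costMeasure q) A ≤ 1 := by
  refine (weight_mono (costMeasure_nonneg hq) (Set.subset_univ A)).trans ?_
  have half_le : ∀ a : ℚ, 0 ≤ a → a / (2 * a) ≤ 1 / 2 := fun a ha => by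
    rcases ha.eq_or_lt with rfl | ha
    · norm_num
    · rw [div_le_iff₀ (by positivity)]
      linarith
  simp only [weight, Set.toFinset_univ, costMeasure, Finset.sum_add_distrib, ← Finset.sum_div,
    Finset.sum_const, Finset.card_univ, nsmul_eq_mul, ← Nat.card_eq_fintype_card, mul_one]
  linarith [half_le _ (Fintype.sum_nonneg hq), half_le (Nat.card V : ℚ) (by positivity)]

end CostMeasure

section Large

variable {V : Type*} {X Y : Set V}

def IsLarge (X : Set V) : Prop := 2 * Nat.card V < 3 * X.ncard

theorem IsLarge.mono [Finite V] (hX : IsLarge X) (hXY : X ⊆ Y) : IsLarge Y :=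
  hX.trans_le (Nat.mul_le_mul_left 3 (Set.ncard_le_ncard hXY))

theorem IsLarge.inter_nonempty [Finite V] (hX : IsLarge X) (hY : IsLarge Y) : (X ∩ Y).Nonempty :=
  Set.nonempty_inter_of_lt_ncard_add_ncard (by unfold IsLarge at hX hY; omega)

theorem isBalancedSeparator_of_forall_not_isLarge {G : SimpleGraph V} {T : Set V}
    (h : ∀ X, G.IsComponentMinus T X → ¬ IsLarge X) : IsBalancedSeparator G T := fun K => by
  have hK := h _ (isComponentMinus_image_supp K)
  rw [IsLarge, Set.ncard_image_of_injective _ Subtype.val_injective] at hK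
  omega

end Large

section Growth

variable {R : Type*} [CommSemiring R] [PartialOrder R] [IsOrderedRing R] {t : R}

theorem pow_mul_le_of_mul_le_succ {a : ℕ → R} (ht : 0 ≤ t) :
    ∀ n, (∀ r < n, t * a r ≤ a (r + 1)) → t ^ n * a 0 ≤ a n
  | 0, _ => by simp
  | n + 1, h => calc
      t ^ (n + 1) * a 0 = t * (t ^ n * a 0) := by ring
      _ ≤ t * a n := mul_le_mul_of_nonneg_left
          (pow_mul_le_of_mul_le_succ ht n fun r hr => h r (by omega)) ht
      _ ≤ a (n + 1) := h n n.lt_succ_self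

theorem pow_mul_le_of_mul_succ_le {b : ℕ → R} (ht : 0 ≤ t) :
    ∀ n, (∀ r < n, t * b (r + 1) ≤ b r) → t ^ n * b n ≤ b 0
  | 0, _ => by simp
  | n + 1, h => calc
      t ^ (n + 1) * b (n + 1) = t ^ n * (t * b (n + 1)) := by ring
      _ ≤ t ^ n * b n := mul_le_mul_of_nonneg_left (h n n.lt_succ_self) (pow_nonneg ht n)
      _ ≤ b 0 := pow_mul_le_of_mul_succ_le ht n fun r hr => h r (by omega)

end Growth

section Field

variable {K : Type*} [Field K] [LinearOrder K] [IsStrictOrderedRing K]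

theorem two_le_one_add_one_div_pow {k : ℕ} (hk : 0 < k) : (2 : K) ≤ (1 + 1 / k) ^ k := by
  have h := one_add_mul_le_pow (a := 1 / (k : K)) (by
    have : (0 : K) ≤ 1 / k := by positivity
    linarith) k
  rwa [mul_one_div_cancel (by positivity), one_add_one_eq_two] at h

theorem one_add_one_div_mul_le {k a b : K} (hk : 0 < k) (h : a ≤ k * b) :
    (1 + 1 / k) * a ≤ a + b := by
  rw [add_mul, one_mul, add_le_add_iff_left, one_div_mul_eq_div, div_le_iff₀ hk, mul_comm]
  exact h

end Field

section LightLayer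

variable {V : Type*} [Fintype V] {G : SimpleGraph V} {X : Set V} {v : V} {μ : V → ℚ}
  {k ε : ℚ} {D : ℕ}

theorem exists_light_layer_inside (hμ : ∀ x, 0 ≤ μ x) (hv : v ∈ X) (hX : weight μ X ≤ 1)
    (hk : 0 < k) (hε : ε ≤ μ v) (hD : 1 < (1 + 1 / k) ^ D * ε) :
    ∃ r < D, k * weight μ (G.layer X v r) ≤ weight μ (G.ballIn X v r) := by
  by_contra! heavy
  have grow : ∀ r < D,
      (1 + 1 / k) * weight μ (G.ballIn X v r) ≤ weight μ (G.ballIn X v (r + 1)) := by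
    intro r hr
    rw [← ballIn_union_layer, weight_union (disjoint_ballIn_layer r)]
    exact one_add_one_div_mul_le hk (heavy r hr).le
  have hB0 : weight μ (G.ballIn X v 0) = μ v := weight_singleton v
  have key : (1 + 1 / k) ^ D * ε ≤ 1 := calc
    (1 + 1 / k) ^ D * ε ≤ (1 + 1 / k) ^ D * weight μ (G.ballIn X v 0) := by rw [hB0]; gcongr
    _ ≤ weight μ (G.ballIn X v D) := pow_mul_le_of_mul_le_succ (by positivity) D grow
    _ ≤ 1 := (weight_mono hμ (ballIn_subset hv D)).trans hX
  linarith

theorem exists_light_layer_outside (hμ : ∀ x, 0 ≤ μ x) (hv : v ∈ X) (hX : weight μ X ≤ 1)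
    (hk : 0 < k) (hε : ∀ x, ε ≤ μ x) (hD : 1 < (1 + 1 / k) ^ D * ε) (s : ℕ)
    (hcover : ¬ X ⊆ G.ballIn X v (s + D)) :
    ∃ r, s ≤ r ∧ r < s + D ∧
      k * weight μ (G.layer X v r) ≤ weight μ (X \ G.ballIn X v (r + 1)) := by
  by_contra! heavy
  have shrink : ∀ j < D, (1 + 1 / k) * weight μ (X \ G.ballIn X v (s + (j + 1))) ≤
      weight μ (X \ G.ballIn X v (s + j)) := fun j hj => by
    rw [← layer_union_diff_ballIn hv (s + j), weight_union (disjoint_layer_diff_ballIn _),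
      add_comm (weight μ _), ← add_assoc]
    exact one_add_one_div_mul_le hk (heavy (s + j) (by omega) (by omega)).le
  have hrest : (X \ G.ballIn X v (s + D)).Nonempty := Set.sdiff_nonempty.mpr hcover
  have key : (1 + 1 / k) ^ D * ε ≤ 1 := calc
    (1 + 1 / k) ^ D * ε ≤ (1 + 1 / k) ^ D * weight μ (X \ G.ballIn X v (s + D)) := by
        gcongr
        exact le_weight_of_nonempty hμ hε hrest
    _ ≤ weight μ (X \ G.ballIn X v (s + 0)) :=
        pow_mul_le_of_mul_succ_le (b := fun j => weight μ (X \ G.ballIn X v (s + j)))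
          (by positivity) D shrink
    _ ≤ 1 := (weight_mono hμ Set.sdiff_subset).trans hX
  linarith

theorem exists_light_layer (hμ : ∀ x, 0 ≤ μ x) (hv : v ∈ X) (hX : weight μ X ≤ 1)
    (hk : 0 < k) (hε : ∀ x, ε ≤ μ x) (hD : 1 < (1 + 1 / k) ^ D * ε) :
    ∃ r ≤ 2 * D, X ⊆ G.ballIn X v r ∨
      (¬ IsLarge (G.ballIn X v r) ∧
        k * weight μ (G.layer X v r) ≤ weight μ (G.ballIn X v r)) ∨
      (IsLarge (G.ballIn X v r) ∧
        k * weight μ (G.layer X v r) ≤ weight μ (X \ G.ballIn X v (r + 1))) := by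
  by_cases hlarge : IsLarge (G.ballIn X v D)
  · by_cases hcover : X ⊆ G.ballIn X v (D + D)
    · exact ⟨D + D, by omega, Or.inl hcover⟩
    obtain ⟨r, hDr, hr, hlight⟩ :=
      exists_light_layer_outside hμ hv hX hk hε hD D hcover
    exact ⟨r, by omega, Or.inr (Or.inr ⟨hlarge.mono (ballIn_mono hDr), hlight⟩)⟩
  · obtain ⟨r, hr, hlight⟩ := exists_light_layer_inside hμ hv hX hk (hε v) hD
    exact ⟨r, by omega,
      Or.inr (Or.inl ⟨fun h => hlarge (h.mono (ballIn_mono hr.le)), hlight⟩)⟩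

end LightLayer

section PartialModel

variable {V : Type*} {G : SimpleGraph V} {m₀ d : ℕ}

variable (G) in
structure IsPartialModel (m₀ d : ℕ) (S : List (Set V)) : Prop where
  pairwise : S.Pairwise fun b b' => Disjoint b b' ∧ G.Touches b b'
  rooted : ∀ b ∈ S, ∃ v, G.IsRootedAt v d b
  ncard_le : ∀ b ∈ S, b.ncard ≤ min m₀ (omegaDepth G d) * d

theorem IsPartialModel.sublist {S S' : List (Set V)} (h : IsPartialModel G m₀ d S)
    (hS' : S'.Sublist S) : IsPartialModel G m₀ d S' where
  pairwise := h.pairwise.sublist hS'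
  rooted b hb := h.rooted b (hS'.subset hb)
  ncard_le b hb := h.ncard_le b (hS'.subset hb)

theorem biUnion_subset_of_sublist {S S' : List (Set V)} (hS' : S'.Sublist S) :
    (⋃ b ∈ S', b) ⊆ ⋃ b ∈ S, b :=
  Set.iUnion₂_subset fun _ hb => Set.subset_biUnion_of_mem (u := id) (hS'.subset hb)

theorem biUnion_cons (B : Set V) (S : List (Set V)) :
    (⋃ b ∈ B :: S, b) = B ∪ ⋃ b ∈ S, b := by
  simp

end PartialModel

section Procedure

variable {V : Type*} [Fintype V] {G : SimpleGraph V} {q : V → ℚ} {ℓ m₀ d : ℕ}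

variable (G) in
def ModelOrSeparator (q : V → ℚ) (ℓ m₀ d : ℕ) : Prop :=
  (∃ M : CliqueModel G m₀ d, M.Bounded m₀) ∨
  (∃ (C M : Finset V) (m : ℕ) (Mod : CliqueModel G m d),
    Disjoint C M ∧
    IsBalancedSeparator G (↑C ∪ ↑M) ∧
    (∑ v ∈ C, q v) ≤ (∑ v, q v) / (ℓ : ℚ) ∧
    m ≤ min m₀ (omegaDepth G d) ∧
    Mod.support = ↑M ∧
    Mod.Bounded (min m₀ (omegaDepth G d)))

theorem modelOrSeparator_of_forall_not_isLarge (hℓ : 1 ≤ ℓ) {C : Set V} {S : List (Set V)}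
    (hS : IsPartialModel G m₀ d S) (hlen : S.length ≤ m₀) (hCS : Disjoint C (⋃ b ∈ S, b))
    (hcost : ℓ * weight q C ≤ ∑ x, q x)
    (hsep : ∀ X, G.IsComponentMinus (C ∪ ⋃ b ∈ S, b) X → ¬ IsLarge X) :
    ModelOrSeparator G q ℓ m₀ d := by
  let M := CliqueModel.ofList S hS.pairwise hS.rooted
  refine Or.inr ⟨C.toFinset, (⋃ b ∈ S, b).toFinset, S.length, M,
    Set.disjoint_toFinset.mpr hCS, ?_, ?_, le_min hlen M.le_omegaDepth, ?_,
    CliqueModel.bounded_ofList _ _ _ hS.ncard_le⟩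
  · simpa only [Set.coe_toFinset] using isBalancedSeparator_of_forall_not_isLarge hsep
  · rw [le_div_iff₀ (by exact_mod_cast hℓ), mul_comm]
    exact hcost
  · rw [CliqueModel.support_ofList, Set.coe_toFinset]

variable (G) in
/-- A state of the procedure: the cut `C`, the branch sets `S` built so far, and the large
component `X` of what remains; the cost of `C` is charged to the part no longer in play. -/
structure Stage (q : V → ℚ) (ℓ m₀ d : ℕ) (C : Set V) (S : List (Set V)) (X : Set V) :
    Prop where
  component : G.IsComponentMinus (C ∪ ⋃ b ∈ S, b) X
  large : IsLarge X
  model : IsPartialModel G m₀ d S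
  length_lt : S.length < m₀
  touches : ∀ b ∈ S, G.Touches b X
  disjoint : Disjoint C (⋃ b ∈ S, b)
  cost : ℓ * weight q C ≤ (∑ x, q x) * weight (costMeasure q) (X ∪ C)ᶜ

variable (G) in
def StageSolvedBelow (q : V → ℚ) (ℓ m₀ d N : ℕ) : Prop :=
  ∀ C S X, X.ncard < N → Stage G q ℓ m₀ d C S X → ModelOrSeparator G q ℓ m₀ d

theorem modelOrSeparator_of_progress (hℓ : 1 ≤ ℓ) {N : ℕ}
    (ih : StageSolvedBelow G q ℓ m₀ d N)
    {C : Set V} {S : List (Set V)} (hS : IsPartialModel G m₀ d S) (hlen : S.length < m₀)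
    (hCS : Disjoint C (⋃ b ∈ S, b)) (hcost : ℓ * weight q C ≤ ∑ x, q x)
    (hnext : ∀ X, G.IsComponentMinus (C ∪ ⋃ b ∈ S, b) X → IsLarge X →
      X.ncard < N ∧ ℓ * weight q C ≤ (∑ x, q x) * weight (costMeasure q) (X ∪ C)ᶜ) :
    ModelOrSeparator G q ℓ m₀ d := by
  by_cases hsep : ∀ X, G.IsComponentMinus (C ∪ ⋃ b ∈ S, b) X → ¬ IsLarge X
  · exact modelOrSeparator_of_forall_not_isLarge hℓ hS hlen.le hCS hcost hsep
  push Not at hsep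
  obtain ⟨X, hX, hXlarge⟩ := hsep
  obtain ⟨hXN, hXcost⟩ := hnext X hX hXlarge
  -- branch sets that do not touch the new component are given back to the graph
  have hS' : (S.filter fun b => G.Touches b X).Sublist S := List.filter_sublist
  refine ih C _ X hXN ⟨?_, hXlarge, hS.sublist hS', hS'.length_le.trans_lt hlen, ?_,
    hCS.mono_right (biUnion_subset_of_sublist hS'), hXcost⟩
  · refine hX.of_subset_of_not_adj
      (Set.union_subset_union_right _ (biUnion_subset_of_sublist hS')) ?_
    rintro x hx y ⟨hyC | hyS, hy'⟩ hxy
    · exact hy' (Or.inl hyC)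
    obtain ⟨b, hb, hyb⟩ := Set.mem_iUnion₂.mp hyS
    exact hy' (Or.inr (Set.mem_biUnion (List.mem_filter.mpr ⟨hb, decide_eq_true
      ⟨y, hyb, x, hx, hxy.symm⟩⟩) hyb))
  · intro b hb
    simpa using (List.mem_filter.mp hb).2

namespace Stage

variable {C : Set V} {S : List (Set V)} {X : Set V} {v : V} {r : ℕ}

theorem cost_le (hq : ∀ x, 0 ≤ q x) (h : Stage G q ℓ m₀ d C S X) :
    ℓ * weight q C ≤ ∑ x, q x :=
  h.cost.trans (mul_le_of_le_one_right (Fintype.sum_nonneg hq) (weight_costMeasure_le_one hq _))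

theorem subset_of_isLarge (h : Stage G q ℓ m₀ d C S X) {T X' : Set V}
    (hT : C ∪ (⋃ b ∈ S, b) ⊆ T) (hX' : G.IsComponentMinus T X') (hlarge : IsLarge X') :
    X' ⊆ X :=
  h.component.subset_of_inter_nonempty hX' hT (h.large.inter_nonempty hlarge)

theorem disjoint_cut (h : Stage G q ℓ m₀ d C S X) : Disjoint C X :=
  (h.component.disjoint.mono_right Set.subset_union_left).symm

theorem cost_union_le (hq : ∀ x, 0 ≤ q x) (h : Stage G q ℓ m₀ d C S X) {L P : Set V}
    (hL : L ⊆ X) (hP : P ⊆ X)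
    (hlight : 2 * ℓ * weight (costMeasure q) L ≤ weight (costMeasure q) P) :
    ℓ * weight q (C ∪ L) ≤ (∑ x, q x) * weight (costMeasure q) ((X ∪ C)ᶜ ∪ P) := by
  have hqL : weight q L ≤ 2 * (∑ x, q x) * weight (costMeasure q) L := by
    rw [← weight_const_mul]
    exact weight_le_weight (le_mul_costMeasure hq) L
  have hQ := Fintype.sum_nonneg hq
  have hcostL : ℓ * weight q L ≤ (∑ x, q x) * weight (costMeasure q) P := calc
    ℓ * weight q L ≤ ℓ * (2 * (∑ x, q x) * weight (costMeasure q) L) := by gcongr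
    _ = (∑ x, q x) * (2 * ℓ * weight (costMeasure q) L) := by ring
    _ ≤ (∑ x, q x) * weight (costMeasure q) P := by gcongr
  rw [weight_union (h.disjoint_cut.mono_right hL),
    weight_union (disjoint_compl_left.mono_right (hP.trans Set.subset_union_left))]
  linarith [h.cost]

theorem modelOrSeparator_of_cut (hq : ∀ x, 0 ≤ q x) (hℓ : 1 ≤ ℓ)
    (h : Stage G q ℓ m₀ d C S X)
    (ih : StageSolvedBelow G q ℓ m₀ d X.ncard)
    {L P : Set V} (hL : L ⊆ X) (hP : P ⊆ X) (hLP : Disjoint L P)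
    (hlight : 2 * ℓ * weight (costMeasure q) L ≤ weight (costMeasure q) P)
    (hnext : ∀ X', G.IsComponentMinus (C ∪ L ∪ ⋃ b ∈ S, b) X' → IsLarge X' →
      X' ≠ X ∧ Disjoint X' P) :
    ModelOrSeparator G q ℓ m₀ d := by
  have hcost := h.cost_union_le hq hL hP hlight
  refine modelOrSeparator_of_progress (C := C ∪ L) hℓ ih h.model h.length_lt
    (Set.disjoint_union_left.mpr ⟨h.disjoint, ?_⟩) ?_ fun X' hX' hlarge' => ?_
  · exact (h.component.disjoint.mono_right Set.subset_union_right).mono_left hL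
  · exact hcost.trans (mul_le_of_le_one_right (Fintype.sum_nonneg hq)
      (weight_costMeasure_le_one hq _))
  obtain ⟨hne, hX'P⟩ := hnext X' hX' hlarge'
  have hX'X := h.subset_of_isLarge (Set.union_subset_union_left _ Set.subset_union_left) hX' hlarge'
  refine ⟨Set.ncard_lt_ncard (hX'X.ssubset_of_ne hne), hcost.trans ?_⟩
  refine mul_le_mul_of_nonneg_left (weight_mono (costMeasure_nonneg hq) ?_) (Fintype.sum_nonneg hq)
  rintro x (hx | hx) (hx' | hxC | hxL)
  · exact hx (Or.inl (hX'X hx'))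
  · exact hx (Or.inr hxC)
  · exact hx (Or.inl (hL hxL))
  · exact Set.disjoint_left.mp hX'P hx' hx
  · exact Set.disjoint_left.mp h.disjoint_cut hxC (hP hx)
  · exact Set.disjoint_left.mp hLP hxL hx

theorem pairwise_cons (h : Stage G q ℓ m₀ d C S X) {B : Set V} (hBX : B ⊆ X)
    (hB : ∀ b ∈ S, G.Touches b B) :
    (B :: S).Pairwise fun b b' => Disjoint b b' ∧ G.Touches b b' :=
  List.pairwise_cons.mpr ⟨fun b hb => ⟨h.component.disjoint.mono hBX
    (Set.subset_union_of_subset_right (Set.subset_biUnion_of_mem (u := id) hb) _),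
    (hB b hb).symm⟩, h.model.pairwise⟩

theorem modelOrSeparator_of_forall_touches (hq : ∀ x, 0 ≤ q x) (hℓ : 1 ≤ ℓ)
    (h : Stage G q ℓ m₀ d C S X)
    (ih : StageSolvedBelow G q ℓ m₀ d X.ncard)
    (hv : v ∈ X) (hrd : r + 1 ≤ d) (htouch : ∀ b ∈ S, G.Touches b (G.ballIn X v r)) :
    ModelOrSeparator G q ℓ m₀ d := by
  obtain ⟨B, hBball, hB, hBcard, hBtouch⟩ :=
    (isRootedAt_ballIn r).exists_subset_touches S htouch
  have hBX : B ⊆ X := hBball.trans (ballIn_subset hv r)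
  have hpair := h.pairwise_cons hBX hBtouch
  have hroot : ∀ b ∈ B :: S, ∃ v, G.IsRootedAt v d b := by
    rintro b (_ | ⟨_, hb⟩)
    exacts [⟨v, hB.mono (by omega)⟩, h.model.rooted b hb]
  have hBd : B.ncard ≤ (S.length + 1) * d := hBcard.trans (by nlinarith)
  have hω : S.length + 1 ≤ omegaDepth G d := (CliqueModel.ofList _ hpair hroot).le_omegaDepth
  rcases (Nat.succ_le_of_lt h.length_lt).eq_or_lt with hfull | hlen
  · subst hfull
    refine Or.inl ⟨CliqueModel.ofList _ hpair hroot, CliqueModel.bounded_ofList _ _ _ ?_⟩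
    rintro b (_ | ⟨_, hb⟩)
    exacts [hBd, (h.model.ncard_le b hb).trans (Nat.mul_le_mul_right d (min_le_left _ _))]
  have hS : IsPartialModel G m₀ d (B :: S) := ⟨hpair, hroot, by
    rintro b (_ | ⟨_, hb⟩)
    exacts [hBd.trans (Nat.mul_le_mul_right d (le_min hlen.le hω)), h.model.ncard_le b hb]⟩
  have hCB : Disjoint C B := h.disjoint_cut.mono_right hBX
  refine modelOrSeparator_of_progress hℓ ih hS hlen
    (biUnion_cons B S ▸ Set.disjoint_union_right.mpr ⟨hCB, h.disjoint⟩)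
    (h.cost_le hq) fun X' hX' hlarge' => ?_
  have hX'X := h.subset_of_isLarge
    (biUnion_cons B S ▸ Set.union_subset_union_right C Set.subset_union_right) hX' hlarge'
  have hvX' : v ∉ X' := fun hvX' =>
    Set.disjoint_left.mp hX'.disjoint hvX' (Or.inr (biUnion_cons B S ▸ Or.inl hB.mem))
  refine ⟨Set.ncard_lt_ncard (hX'X.ssubset_of_ne fun hXX' => hvX' (hXX' ▸ hv)),
    h.cost.trans ?_⟩
  exact mul_le_mul_of_nonneg_left (weight_mono (costMeasure_nonneg hq)
    (Set.compl_subset_compl.mpr (Set.union_subset_union_left C hX'X))) (Fintype.sum_nonneg hq)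

theorem isComponentMinus_ballIn (h : Stage G q ℓ m₀ d C S X) (hv : v ∈ X) (r : ℕ) :
    G.IsComponentMinus (C ∪ G.layer X v r ∪ ⋃ b ∈ S, b) (G.ballIn X v r) := by
  rw [Set.union_right_comm]
  exact h.component.isComponentMinus_ballIn hv r

theorem modelOrSeparator_of_light_ballIn (hq : ∀ x, 0 ≤ q x) (hℓ : 1 ≤ ℓ)
    (h : Stage G q ℓ m₀ d C S X)
    (ih : StageSolvedBelow G q ℓ m₀ d X.ncard)
    (hv : v ∈ X) (hsmall : ¬ IsLarge (G.ballIn X v r))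
    (hlight : 2 * ℓ * weight (costMeasure q) (G.layer X v r) ≤
      weight (costMeasure q) (G.ballIn X v r)) :
    ModelOrSeparator G q ℓ m₀ d := by
  refine h.modelOrSeparator_of_cut hq hℓ ih (layer_subset hv r) (ballIn_subset hv r)
    (disjoint_ballIn_layer r).symm hlight fun X' hX' hlarge' => ?_
  have hdisj : Disjoint X' (G.ballIn X v r) := by
    rw [Set.disjoint_iff_inter_eq_empty, ← Set.not_nonempty_iff_eq_empty]
    exact fun hne =>
      hsmall (hX'.eq_of_inter_nonempty (h.isComponentMinus_ballIn hv r) hne ▸ hlarge')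
  exact ⟨fun hX'X => Set.disjoint_left.mp hdisj (hX'X ▸ hv) (mem_ballIn_self r), hdisj⟩

theorem modelOrSeparator_of_light_compl_ballIn (hq : ∀ x, 0 ≤ q x) (hℓ : 1 ≤ ℓ)
    (h : Stage G q ℓ m₀ d C S X)
    (ih : StageSolvedBelow G q ℓ m₀ d X.ncard)
    (hv : v ∈ X) (hlarge : IsLarge (G.ballIn X v r))
    (hlight : 2 * ℓ * weight (costMeasure q) (G.layer X v r) ≤
      weight (costMeasure q) (X \ G.ballIn X v (r + 1)))
    (hmiss : ¬ ∀ b ∈ S, G.Touches b (G.ballIn X v r)) :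
    ModelOrSeparator G q ℓ m₀ d := by
  refine h.modelOrSeparator_of_cut hq hℓ ih (layer_subset hv r) Set.sdiff_subset
    (disjoint_layer_diff_ballIn r) hlight fun X' hX' hlarge' => ?_
  obtain rfl := hX'.eq_of_inter_nonempty (h.isComponentMinus_ballIn hv r)
    (hlarge'.inter_nonempty hlarge)
  refine ⟨fun hball => hmiss fun b hb => (h.touches b hb).mono_right hball.symm.subset, ?_⟩
  exact Set.disjoint_left.mpr fun x hx hx' => hx'.2 (ballIn_mono r.le_succ hx)

theorem modelOrSeparator (hq : ∀ x, 0 ≤ q x) (hℓ : 1 ≤ ℓ) {D : ℕ}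
    (hD : (2 * Nat.card V : ℚ) < (1 + 1 / (2 * ℓ : ℚ)) ^ D) (hd : 2 * D + 1 ≤ d)
    (h : Stage G q ℓ m₀ d C S X) : ModelOrSeparator G q ℓ m₀ d := by
  induction hN : X.ncard using Nat.strong_induction_on generalizing C S X with | _ N ih => ?_
  subst hN
  replace ih : StageSolvedBelow G q ℓ m₀ d X.ncard := fun C S X' hlt h' => ih _ hlt h' rfl
  obtain ⟨v, hv⟩ := h.component.nonempty
  have hV : (0 : ℚ) < Nat.card V := by
    exact_mod_cast Nat.card_pos_iff.mpr ⟨⟨v⟩, inferInstance⟩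
  obtain ⟨r, hr, hcases⟩ := exists_light_layer (G := G) (k := 2 * ℓ) (D := D)
    (costMeasure_nonneg hq) hv
    (weight_costMeasure_le_one hq X) (by positivity) (le_costMeasure hq)
    (by rwa [mul_one_div, one_lt_div (by positivity)])
  by_cases htouch : ∀ b ∈ S, G.Touches b (G.ballIn X v r)
  · exact h.modelOrSeparator_of_forall_touches hq hℓ ih hv (by omega) htouch
  rcases hcases with hcover | ⟨hsmall, hlight⟩ | ⟨hlarge, hlight⟩
  · exact absurd (fun b hb => (h.touches b hb).mono_right hcover) htouch
  · exact h.modelOrSeparator_of_light_ballIn hq hℓ ih hv hsmall hlight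
  · exact h.modelOrSeparator_of_light_compl_ballIn hq hℓ ih hv hlarge hlight htouch

end Stage

theorem modelOrSeparator (hq : ∀ x, 0 ≤ q x) (hℓ : 1 ≤ ℓ) (hm₀ : 1 ≤ m₀) {D : ℕ}
    (hD : (2 * Nat.card V : ℚ) < (1 + 1 / (2 * ℓ : ℚ)) ^ D) (hd : 2 * D + 1 ≤ d) :
    ModelOrSeparator G q ℓ m₀ d :=
  modelOrSeparator_of_progress (C := ∅) (S := []) (N := Nat.card V + 1) hℓ
    (fun _ _ _ _ h => h.modelOrSeparator hq hℓ hD hd) ⟨by simp, by simp, by simp⟩ hm₀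
    (by simp) (by simp [weight, Fintype.sum_nonneg hq])
    fun X _ _ => ⟨Nat.lt_succ_of_le (Set.ncard_le_card X), by
      simpa [weight] using
        mul_nonneg (Fintype.sum_nonneg hq) (weight_nonneg (costMeasure_nonneg hq) Xᶜ)⟩

end Procedure

theorem two_mul_lt_pow {ℓ : ℕ} (hℓ : 1 ≤ ℓ) (n : ℕ) :
    (2 * n : ℚ) < (1 + 1 / (2 * ℓ : ℚ)) ^ (2 * ℓ * (Nat.log 2 n + 2)) := by
  have hbase : (2 : ℚ) ≤ (1 + 1 / (2 * ℓ : ℚ)) ^ (2 * ℓ) := by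
    exact_mod_cast two_le_one_add_one_div_pow (K := ℚ) (k := 2 * ℓ) (by omega)
  have hlog : (n : ℚ) < 2 ^ (Nat.log 2 n + 1) := by
    exact_mod_cast Nat.lt_pow_succ_log_self one_lt_two n
  calc (2 * n : ℚ) < 2 ^ (Nat.log 2 n + 2) := by rw [pow_succ]; linarith
    _ ≤ ((1 + 1 / (2 * ℓ : ℚ)) ^ (2 * ℓ)) ^ (Nat.log 2 n + 2) := by gcongr
    _ = _ := by rw [← pow_mul]

/-- `2D + 1`, where balls stop growing within `D = 2ℓ(⌊log₂ n⌋ + 2)` steps by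
`two_mul_lt_pow`. -/
def depth (ℓ n : ℕ) : ℕ := 2 * (2 * ℓ * (Nat.log 2 n + 2)) + 1

theorem depth_mono {ℓ ℓ' n n' : ℕ} (hℓ : ℓ ≤ ℓ') (hn : n ≤ n') : depth ℓ n ≤ depth ℓ' n' := by
  have := Nat.log_mono_right (b := 2) hn
  unfold depth
  gcongr

theorem depth_le {ℓ n : ℕ} (hℓ : 1 ≤ ℓ) (hn : 1 ≤ n) :
    (depth ℓ n : ℝ) ≤ 13 * ℓ * Real.logb 2 (n + 1) := by
  have hL : 1 ≤ Real.logb 2 (n + 1) := by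
    rw [Real.le_logb_iff_rpow_le one_lt_two (by positivity), Real.rpow_one]
    exact_mod_cast Nat.succ_le_succ hn
  have hlog : (Nat.log 2 n : ℝ) ≤ Real.logb 2 (n + 1) :=
    (Real.natLog_le_logb n 2).trans
      (Real.logb_le_logb_of_le one_lt_two (by positivity) (by linarith))
  have hℓ' : (1 : ℝ) ≤ ℓ := by exact_mod_cast hℓ
  unfold depth
  push_cast
  nlinarith

end PlotkinRaoSmith

open PlotkinRaoSmith

/-- weighted Plotkin–Rao–Smith, Theorem 4. -/
theorem stmt7 :
    ∃ (a : ℝ) (d : ℕ → ℕ → ℕ), 0 < a ∧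
      (∀ ℓ ℓ' n n' : ℕ, ℓ ≤ ℓ' → n ≤ n' → d ℓ n ≤ d ℓ' n') ∧
      (∀ ℓ n : ℕ, 1 ≤ ℓ → 1 ≤ n → (d ℓ n : ℝ) ≤ a * ℓ * Real.logb 2 (n + 1)) ∧
      (∀ (V : Type) [Fintype V] (G : SimpleGraph V) (n ℓ m₀ : ℕ) (q : V → ℚ),
        Fintype.card V = n → 1 ≤ ℓ → 1 ≤ m₀ → (∀ v, 0 ≤ q v) →
        (∃ M : CliqueModel G m₀ (d ℓ n), M.Bounded m₀) ∨
        (∃ (C M : Finset V) (m : ℕ) (Mod : CliqueModel G m (d ℓ n)),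
          Disjoint C M ∧
          IsBalancedSeparator G (↑C ∪ ↑M) ∧
          (∑ v ∈ C, q v) ≤ (∑ v, q v) / (ℓ : ℚ) ∧
          m ≤ min m₀ (omegaDepth G (d ℓ n)) ∧
          Mod.support = ↑M ∧
          Mod.Bounded (min m₀ (omegaDepth G (d ℓ n))))) := by
  refine ⟨13, depth, by norm_num, fun _ _ _ _ => depth_mono, fun _ _ => depth_le, ?_⟩
  intro V _ G n ℓ m₀ q hn hℓ hm₀ hq
  subst hn
  exact modelOrSeparator hq hℓ hm₀
    (Nat.card_eq_fintype_card (α := V) ▸ two_mul_lt_pow hℓ _) le_rfl
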